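/- Let f : [a,b] → ℝ be continuous with 0 ≤ a < b < ∞, let l ≥ 1, and let p, q > 0. If |f|^l is quasi-convex on [a,b], then ∫_a^b (x-a)^p (b-x)^q f(x) dx ≤ (b-a)^(p+q+1) · B(p+1, q+1) · (max{|f(a)|^l, |f(b)|^l})^(1/l). -/

import Mathlib

/-!
Quasi-convexity of `|f|^l` bounds `|f|^l` on `[a, b]` by its larger endpoint value, hence
`f ≤ (max (|f a|^l) (|f b|^l))^(1/l)` pointwise. Integrating this bound against the nonnegative
weight `(x - a)^p (b - x)^q`, whose integral is `(b - a)^(p+q+1) B(p+1, q+1)` after the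
substitution `x = a + (b - a) t`, gives the inequality.
-/

noncomputable def eulerBeta (x y : ℝ) : ℝ :=
  ∫ t in (0:ℝ)..1, t ^ (x - 1) * (1 - t) ^ (y - 1)

open Set

theorem quasiconvexOn_Icc_of_le_max {a b : ℝ} {g : ℝ → ℝ}
    (hg : ∀ x ∈ Icc a b, ∀ y ∈ Icc a b, ∀ t ∈ Icc (0:ℝ) 1,
      g (t * x + (1 - t) * y) ≤ max (g x) (g y)) :
    QuasiconvexOn ℝ (Icc a b) g := by
  refine quasiconvexOn_iff_le_max.2 ⟨convex_Icc a b, fun x hx y hy s t hs ht hst => ?_⟩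
  obtain rfl : t = 1 - s := by linarith
  exact hg x hx y hy s ⟨hs, by linarith⟩

theorem QuasiconvexOn.le_max_of_mem_Icc {a b x : ℝ} {g : ℝ → ℝ}
    (hg : QuasiconvexOn ℝ (Icc a b) g) (hx : x ∈ Icc a b) :
    g x ≤ max (g a) (g b) := by
  have hab : a ≤ b := hx.1.trans hx.2
  have hsub := (hg (max (g a) (g b))).segment_subset
    ⟨left_mem_Icc.2 hab, le_max_left _ _⟩ ⟨right_mem_Icc.2 hab, le_max_right _ _⟩
  rw [segment_eq_Icc hab] at hsub
  exact (hsub hx).2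

theorem le_rpow_one_div_of_abs_rpow_le {x m l : ℝ} (hl : 0 < l) (h : |x| ^ l ≤ m) :
    x ≤ m ^ (1 / l) := by
  have hm : 0 ≤ m := (Real.rpow_nonneg (abs_nonneg x) l).trans h
  rw [one_div]
  exact (le_abs_self x).trans <| (Real.le_rpow_inv_iff_of_pos (abs_nonneg x) hm hl).2 h

theorem integral_sub_rpow_mul_sub_rpow {a b : ℝ} (hab : a < b) (p q : ℝ) :
    ∫ x in a..b, (x - a) ^ p * (b - x) ^ q =
      (b - a) ^ (p + q + 1) * eulerBeta (p + 1) (q + 1) := by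
  have hba : 0 < b - a := sub_pos.2 hab
  have hsubst := intervalIntegral.smul_integral_comp_mul_add
    (fun x => (x - a) ^ p * (b - x) ^ q) (b - a) a (a := 0) (b := 1)
  rw [mul_zero, zero_add, mul_one, sub_add_cancel] at hsubst
  have hscale : ∀ t ∈ uIcc (0:ℝ) 1,
      ((b - a) * t + a - a) ^ p * (b - ((b - a) * t + a)) ^ q =
        (b - a) ^ p * (b - a) ^ q * (t ^ p * (1 - t) ^ q) := by
    intro t ht
    rw [uIcc_of_le zero_le_one] at ht
    rw [show (b - a) * t + a - a = (b - a) * t by ring,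
      show b - ((b - a) * t + a) = (b - a) * (1 - t) by ring,
      Real.mul_rpow hba.le ht.1, Real.mul_rpow hba.le (sub_nonneg.2 ht.2)]
    ring
  have hpow : (b - a) ^ (p + q + 1) = (b - a) * ((b - a) ^ p * (b - a) ^ q) := by
    rw [add_assoc, Real.rpow_add hba, Real.rpow_add_one hba.ne']
    ring
  rw [← hsubst, intervalIntegral.integral_congr hscale, intervalIntegral.integral_const_mul,
    hpow, eulerBeta, add_sub_cancel_right, add_sub_cancel_right, smul_eq_mul]
  ring

theorem stmt3_general (a b p q l : ℝ) (f : ℝ → ℝ) (hab : a < b)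
    (hf : ContinuousOn f (Set.Icc a b)) (hl : 1 ≤ l) (hp : 0 < p) (hq : 0 < q)
    (hqc : ∀ x ∈ Set.Icc a b, ∀ y ∈ Set.Icc a b, ∀ t ∈ Set.Icc (0:ℝ) 1,
      |f (t * x + (1 - t) * y)| ^ l ≤ max (|f x| ^ l) (|f y| ^ l)) :
    ∫ x in a..b, (x - a) ^ p * (b - x) ^ q * f x ≤
      (b - a) ^ (p + q + 1) * eulerBeta (p + 1) (q + 1) *
        (max (|f a| ^ l) (|f b| ^ l)) ^ (1 / l) := by
  set M := (max (|f a| ^ l) (|f b| ^ l)) ^ (1 / l)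
  have hbound : ∀ x ∈ Icc a b, f x ≤ M := fun x hx =>
    le_rpow_one_div_of_abs_rpow_le (by linarith)
      ((quasiconvexOn_Icc_of_le_max (g := fun x => |f x| ^ l) hqc).le_max_of_mem_Icc hx)
  have hw : Continuous fun x : ℝ => (x - a) ^ p * (b - x) ^ q := by
    fun_prop (disch := linarith)
  have hw_nonneg : ∀ x ∈ Icc a b, 0 ≤ (x - a) ^ p * (b - x) ^ q := fun x hx =>
    mul_nonneg (Real.rpow_nonneg (sub_nonneg.2 hx.1) p) (Real.rpow_nonneg (sub_nonneg.2 hx.2) q)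
  calc ∫ x in a..b, (x - a) ^ p * (b - x) ^ q * f x
      ≤ ∫ x in a..b, (x - a) ^ p * (b - x) ^ q * M := by
        refine intervalIntegral.integral_mono_on hab.le ?_ ?_ fun x hx =>
          mul_le_mul_of_nonneg_left (hbound x hx) (hw_nonneg x hx)
        · exact (hw.continuousOn.mul hf).intervalIntegrable_of_Icc hab.le
        · exact (hw.mul continuous_const).intervalIntegrable a b
    _ = (b - a) ^ (p + q + 1) * eulerBeta (p + 1) (q + 1) * M := by
        rw [intervalIntegral.integral_mul_const, integral_sub_rpow_mul_sub_rpow hab]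

theorem stmt3 (a b p q l : ℝ) (f : ℝ → ℝ) (ha : 0 ≤ a) (hab : a < b)
    (hf : ContinuousOn f (Set.Icc a b)) (hl : 1 ≤ l) (hp : 0 < p) (hq : 0 < q)
    (hqc : ∀ x ∈ Set.Icc a b, ∀ y ∈ Set.Icc a b, ∀ t ∈ Set.Icc (0:ℝ) 1,
      |f (t * x + (1 - t) * y)| ^ l ≤ max (|f x| ^ l) (|f y| ^ l)) :
    ∫ x in a..b, (x - a) ^ p * (b - x) ^ q * f x ≤
      (b - a) ^ (p + q + 1) * eulerBeta (p + 1) (q + 1) *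
        (max (|f a| ^ l) (|f b| ^ l)) ^ (1 / l) :=
  stmt3_general a b p q l f hab hf hl hp hq hqc
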